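/- arXiv:2207.00689 — 2 statements merged into one kernel-verified Lean document; each statement's English description precedes it below -/
import Mathlib

section
/- Let P be the transition matrix of an irreducible, aperiodic, reversible Markov chain on a finite state space 𝒳 with stationary distribution π, all entries π(x) > 0. For any choice of paths {δ(x,y)} (a simple E-path for each ordered pair x ≠ y, where E is the edge set of pairs with P(u,v) > 0), the spectral gap satisfies Gap(P) ≥ 1/(ρ(Δ)·ℓ(Δ)), where ℓ(Δ) is the maximum path length and ρ(Δ) = max over edges (u,v) of (1/(π(u)P(u,v))) · Σ_{(x,y): (u,v) ∈ δ(x,y)} π(x)π(y). -/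
/-!
For `x ≠ y`, telescoping `f x - f y` along the simple path `δ x y` and applying Cauchy–Schwarz
gives `(f x - f y)² ≤ ℓ · ∑ (f u - f v)²` over the steps `(u, v)` of `δ x y`, each counted once.
Weighting by `π x π y` and summing over all pairs, then exchanging the order of summation, every
edge `(u, v)` collects its congestion `∑_{(u,v) ∈ δ(x,y)} π x π y ≤ ρ π(u) P(u,v)`; finally
`Var_π f = ½ ∑ₓ ∑ᵧ (f x - f y)² π x π y`.
-/

open Finset

theorem sq_sub_le_mul_sum_sq_sub (a : ℕ → ℝ) (k : ℕ) :
    (a 0 - a k) ^ 2 ≤ k * ∑ i ∈ range k, (a i - a (i + 1)) ^ 2 := by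
  rw [← Finset.sum_range_sub']
  simpa using sq_sum_le_card_mul_sum_sq (s := range k) (f := fun i => a i - a (i + 1))

theorem variance_eq_half_sum_sq_sub {ι : Type*} [Fintype ι] (p f : ι → ℝ) (hp : ∑ x, p x = 1) :
    ∑ x, (f x - ∑ y, f y * p y) ^ 2 * p x
      = (1 / 2) * ∑ x, ∑ y, (f x - f y) ^ 2 * (p x * p y) := by
  set m := ∑ y, f y * p y
  have hinner : ∀ x, ∑ y, (f x - f y) ^ 2 * (p x * p y)
      = f x ^ 2 * p x * ∑ y, p y - 2 * (f x * p x) * m + p x * ∑ y, f y ^ 2 * p y := by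
    intro x
    simp only [m, mul_sum, ← sum_sub_distrib, ← sum_add_distrib]
    exact sum_congr rfl fun y _ => by ring
  have hexpand : ∀ x, (f x - m) ^ 2 * p x = f x ^ 2 * p x - 2 * m * (f x * p x) + m ^ 2 * p x :=
    fun x => by ring
  simp only [hinner, hexpand, sum_add_distrib, sum_sub_distrib, ← sum_mul, ← mul_sum, hp]
  ring

def List.IsStep {α : Type*} (L : List α) (u v : α) : Prop :=
  ∃ i : ℕ, L[i]? = some u ∧ L[i + 1]? = some v

section

variable {α : Type*}

theorem List.IsStep.rel {R : α → α → Prop} {L : List α} {u v : α} (hL : L.IsChain R)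
    (h : L.IsStep u v) : R u v := by
  obtain ⟨i, hu, hv⟩ := h
  obtain ⟨hi, rfl⟩ := List.getElem?_eq_some_iff.mp hu
  obtain ⟨hi', rfl⟩ := List.getElem?_eq_some_iff.mp hv
  exact hL.getElem i hi'

theorem List.isStep_iff_exists_getD {L : List α} (d u v : α) :
    L.IsStep u v ↔ ∃ i < L.length - 1, L.getD i d = u ∧ L.getD (i + 1) d = v := by
  constructor
  · rintro ⟨i, hu, hv⟩
    obtain ⟨hi, rfl⟩ := List.getElem?_eq_some_iff.mp hu
    obtain ⟨hi', rfl⟩ := List.getElem?_eq_some_iff.mp hv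
    exact ⟨i, by omega, L.getD_eq_getElem _ hi, L.getD_eq_getElem _ hi'⟩
  · rintro ⟨i, hi, rfl, rfl⟩
    refine ⟨i, ?_, ?_⟩ <;> simp only [List.getD_eq_getElem?_getD] <;>
      rw [List.getElem?_eq_getElem (by omega)] <;> rfl

open Classical in
theorem List.Nodup.sum_range_getD_eq_sum_isStep [Fintype α] {M : Type*} [AddCommMonoid M]
    {L : List α} (hL : L.Nodup) (d : α) (g : α → α → M) :
    ∑ i ∈ Finset.range (L.length - 1), g (L.getD i d) (L.getD (i + 1) d)
      = ∑ u, ∑ v, if L.IsStep u v then g u v else 0 := by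
  set step : ℕ → α × α := fun i => (L.getD i d, L.getD (i + 1) d)
  have hinj : Set.InjOn step (Finset.range (L.length - 1)) := by
    intro i hi j hj hij
    simp only [coe_range, Set.mem_Iio] at hi hj
    have h := congrArg Prod.fst hij
    simp only [step, L.getD_eq_getElem _ (show i < L.length by omega),
      L.getD_eq_getElem _ (show j < L.length by omega)] at h
    exact hL.getElem_inj_iff.mp h
  have himage :
      (Finset.range (L.length - 1)).image step = univ.filter fun p => L.IsStep p.1 p.2 := by
    ext ⟨u, v⟩
    simp [step, L.isStep_iff_exists_getD d]
  rw [← Fintype.sum_prod_type', ← sum_filter, ← himage, sum_image hinj]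

open Classical in
theorem List.sq_sub_le_length_mul_sum_isStep [Fintype α] (f : α → ℝ) {L : List α} {x y : α}
    (hx : L.head? = some x) (hy : L.getLast? = some y) (hL : L.Nodup) :
    (f x - f y) ^ 2 ≤ ((L.length : ℝ) - 1) *
      ∑ u, ∑ v, if L.IsStep u v then (f u - f v) ^ 2 else 0 := by
  have hlen : 0 < L.length := List.length_pos_iff.mpr (by rintro rfl; simp at hx)
  have h0 : L.getD 0 x = x := by
    rw [List.getD_eq_getElem?_getD, ← List.head?_eq_getElem?, hx, Option.getD_some]
  have hk : L.getD (L.length - 1) x = y := by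
    rw [List.getD_eq_getElem?_getD, ← List.getLast?_eq_getElem?, hy, Option.getD_some]
  have := sq_sub_le_mul_sum_sq_sub (fun i => f (L.getD i x)) (L.length - 1)
  rwa [h0, hk, Nat.cast_pred hlen,
    hL.sum_range_getD_eq_sum_isStep x (fun u v => (f u - f v) ^ 2)] at this

end

section CanonicalPaths

variable {X : Type*} [Fintype X] [DecidableEq X]

open Classical in
noncomputable def congestion (δ : X → X → List X) (w : X → X → ℝ) (u v : X) : ℝ :=
  ∑ x, ∑ y, if x ≠ y ∧ (δ x y).IsStep u v then w x y else 0

theorem congestion_eq_zero_of_not_rel {R : X → X → Prop} {δ : X → X → List X}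
    (hchain : ∀ x y, x ≠ y → (δ x y).IsChain R) (w : X → X → ℝ) {u v : X} (huv : ¬ R u v) :
    congestion δ w u v = 0 :=
  sum_eq_zero fun x _ => sum_eq_zero fun y _ =>
    if_neg fun ⟨hxy, hstep⟩ => huv (hstep.rel (hchain x y hxy))

theorem sum_sq_sub_mul_le_mul_sum_congestion (f : X → ℝ) {w : X → X → ℝ} (hw : ∀ x y, 0 ≤ w x y)
    {δ : X → X → List X} (hhead : ∀ x y, x ≠ y → (δ x y).head? = some x)
    (hlast : ∀ x y, x ≠ y → (δ x y).getLast? = some y) (hnodup : ∀ x y, x ≠ y → (δ x y).Nodup)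
    {ℓ : ℝ} (hℓ : ∀ x y, x ≠ y → ((δ x y).length : ℝ) - 1 ≤ ℓ) :
    ∑ x, ∑ y, (f x - f y) ^ 2 * w x y ≤ ℓ * ∑ u, ∑ v, (f u - f v) ^ 2 * congestion δ w u v := by
  classical
  have hpair : ∀ x y, (f x - f y) ^ 2 * w x y ≤ ℓ * ∑ u, ∑ v,
      (f u - f v) ^ 2 * if x ≠ y ∧ (δ x y).IsStep u v then w x y else 0 := by
    intro x y
    by_cases hxy : x = y
    · simp [hxy]
    calc (f x - f y) ^ 2 * w x y
        ≤ (((δ x y).length : ℝ) - 1) *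
            (∑ u, ∑ v, if (δ x y).IsStep u v then (f u - f v) ^ 2 else 0) * w x y :=
          mul_le_mul_of_nonneg_right (List.sq_sub_le_length_mul_sum_isStep f (hhead x y hxy)
            (hlast x y hxy) (hnodup x y hxy)) (hw x y)
      _ ≤ ℓ * (∑ u, ∑ v, if (δ x y).IsStep u v then (f u - f v) ^ 2 else 0) * w x y := by
          gcongr
          · exact hw x y
          · exact hℓ x y hxy
      _ = _ := by
          simp only [mul_assoc, sum_mul, hxy, ne_eq, not_false_eq_true, true_and, mul_ite,
            ite_mul, zero_mul, mul_zero]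
  calc ∑ x, ∑ y, (f x - f y) ^ 2 * w x y
      ≤ ∑ x, ∑ y, ℓ * ∑ u, ∑ v,
          (f u - f v) ^ 2 * if x ≠ y ∧ (δ x y).IsStep u v then w x y else 0 :=
        sum_le_sum fun x _ => sum_le_sum fun y _ => hpair x y
    _ = ℓ * ∑ u, ∑ v, (f u - f v) ^ 2 * congestion δ w u v := by
        simp only [congestion, mul_sum]
        rw [sum_comm_cycle]
        exact sum_congr rfl fun u _ => sum_comm_cycle

theorem sum_sq_sub_mul_congestion_le {P : X → X → ℝ} (hPnn : ∀ u v, 0 ≤ P u v) {δ : X → X → List X}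
    (hchain : ∀ x y, x ≠ y → (δ x y).IsChain (fun u v => u ≠ v ∧ 0 < P u v))
    (f π : X → ℝ) {w : X → X → ℝ} {ρ : ℝ}
    (hρ : ∀ u v, u ≠ v → 0 < P u v → congestion δ w u v ≤ ρ * (π u * P u v)) :
    ∑ u, ∑ v, (f u - f v) ^ 2 * congestion δ w u v
      ≤ ρ * ∑ u, ∑ v, (f u - f v) ^ 2 * (π u * P u v) := by
  simp only [mul_sum]
  refine sum_le_sum fun u _ => sum_le_sum fun v _ => ?_
  by_cases huv : u = v
  · simp [huv]
  by_cases hP : 0 < P u v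
  · calc (f u - f v) ^ 2 * congestion δ w u v ≤ (f u - f v) ^ 2 * (ρ * (π u * P u v)) :=
          mul_le_mul_of_nonneg_left (hρ u v huv hP) (sq_nonneg _)
      _ = ρ * ((f u - f v) ^ 2 * (π u * P u v)) := by ring
  · have hP0 : P u v = 0 := le_antisymm (not_lt.mp hP) (hPnn u v)
    rw [congestion_eq_zero_of_not_rel hchain w fun h => hP h.2, hP0]
    simp

end CanonicalPaths

open Classical in
theorem stmt_8_general {X : Type*} [Fintype X] [DecidableEq X]
    (P : Matrix X X ℝ)
    (hPnn : ∀ x y, 0 ≤ P x y)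
    (π : X → ℝ) (hπpos : ∀ x, 0 < π x) (hπsum : ∑ x, π x = 1)
    -- the path ensemble: a simple E-path `δ x y` for each ordered pair `x ≠ y`
    (δ : X → X → List X)
    (hhead : ∀ x y, x ≠ y → (δ x y).head? = some x)
    (hlast : ∀ x y, x ≠ y → (δ x y).getLast? = some y)
    (hchain : ∀ x y, x ≠ y → (δ x y).Chain' (fun u v => u ≠ v ∧ 0 < P u v))
    (hnodup : ∀ x y, x ≠ y → (δ x y).Nodup)
    -- `ℓ` bounds the path lengths, `ρ` bounds the congestion of every edge
    (ℓ ρ : ℝ)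
    (hℓ : ∀ x y, x ≠ y → ((δ x y).length : ℝ) - 1 ≤ ℓ)
    (hρ : ∀ u v : X, u ≠ v → 0 < P u v →
      (∑ x, ∑ y, if x ≠ y ∧ ∃ i : ℕ, (δ x y)[i]? = some u ∧
            (δ x y)[i + 1]? = some v then π x * π y else 0)
        ≤ ρ * (π u * P u v)) :
    -- Poincaré inequality, i.e. `Gap(P) ≥ 1/(ρ·ℓ)` for the variational gap
    ∀ f : X → ℝ,
      ∑ x, (f x - ∑ y, f y * π y) ^ 2 * π x
        ≤ ρ * ℓ * ((1 / 2) * ∑ x, ∑ y, (f x - f y) ^ 2 * (π x * P x y)) := by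
  intro f
  rw [variance_eq_half_sum_sq_sub π f hπsum]
  rcases subsingleton_or_nontrivial X with _ | _
  · have hconst : ∀ x y : X, f x - f y = 0 := fun x y => by rw [Subsingleton.elim x y, sub_self]
    simp [hconst]
  obtain ⟨a, b, hab⟩ := exists_pair_ne X
  have hℓ0 : 0 ≤ ℓ := by
    have hne : δ a b ≠ [] := fun h => by simpa [h] using hhead a b hab
    have hlen : (1 : ℝ) ≤ (δ a b).length := by exact_mod_cast List.length_pos_iff.mpr hne
    linarith [hℓ a b hab]
  have hpaths := sum_sq_sub_mul_le_mul_sum_congestion f (w := fun x y => π x * π y)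
    (fun x y => (mul_pos (hπpos x) (hπpos y)).le) hhead hlast hnodup hℓ
  have hedges := sum_sq_sub_mul_congestion_le hPnn hchain f π (w := fun x y => π x * π y) hρ
  calc (1 / 2) * ∑ x, ∑ y, (f x - f y) ^ 2 * (π x * π y)
      ≤ (1 / 2) * (ℓ * (ρ * ∑ u, ∑ v, (f u - f v) ^ 2 * (π u * P u v))) := by
        gcongr
        exact hpaths.trans (mul_le_mul_of_nonneg_left hedges hℓ0)
    _ = _ := by ring

open Classical in
/-- Sinclair's canonical-path (Poincaré) bound: for every choice of simple
paths between all ordered pairs of distinct states, the variational spectral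
gap of a reversible chain satisfies `Gap(P) ≥ 1/(ρ(Δ)·ℓ(Δ))`, stated in the
equivalent Poincaré form `Var_π(f) ≤ ρ(Δ)·ℓ(Δ)·E(f,f)` for all `f`. -/
theorem stmt_8 {X : Type*} [Fintype X] [DecidableEq X] [Nonempty X]
    (P : Matrix X X ℝ)
    (hPnn : ∀ x y, 0 ≤ P x y) (hProw : ∀ x, ∑ y, P x y = 1)
    (hirr : ∀ x y : X, ∃ m : ℕ, 0 < (P ^ m) x y)
    (haper : ∀ x : X, ∃ m₀ : ℕ, ∀ m ≥ m₀, 0 < (P ^ m) x x)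
    (π : X → ℝ) (hπpos : ∀ x, 0 < π x) (hπsum : ∑ x, π x = 1)
    (hrev : ∀ x y, π x * P x y = π y * P y x)
    -- the path ensemble: a simple E-path `δ x y` for each ordered pair `x ≠ y`
    (δ : X → X → List X)
    (hhead : ∀ x y, x ≠ y → (δ x y).head? = some x)
    (hlast : ∀ x y, x ≠ y → (δ x y).getLast? = some y)
    (hchain : ∀ x y, x ≠ y → (δ x y).Chain' (fun u v => u ≠ v ∧ 0 < P u v))
    (hnodup : ∀ x y, x ≠ y → (δ x y).Nodup)
    -- `ℓ` bounds the path lengths, `ρ` bounds the congestion of every edge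
    (ℓ ρ : ℝ)
    (hℓ : ∀ x y, x ≠ y → ((δ x y).length : ℝ) - 1 ≤ ℓ)
    (hρ : ∀ u v : X, u ≠ v → 0 < P u v →
      (∑ x, ∑ y, if x ≠ y ∧ ∃ i : ℕ, (δ x y)[i]? = some u ∧
            (δ x y)[i + 1]? = some v then π x * π y else 0)
        ≤ ρ * (π u * P u v)) :
    -- Poincaré inequality, i.e. `Gap(P) ≥ 1/(ρ·ℓ)` for the variational gap
    ∀ f : X → ℝ,
      ∑ x, (f x - ∑ y, f y * π y) ^ 2 * π x
        ≤ ρ * ℓ * ((1 / 2) * ∑ x, ∑ y, (f x - f y) ^ 2 * (π x * P x y)) :=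
  stmt_8_general P hPnn π hπpos hπsum δ hhead hlast hchain hnodup ℓ ρ hℓ hρ
end

section
/- Let 𝒳 be a finite set, x* ∈ 𝒳, and g : 𝒳 → 𝒳 with g(x*) = x* such that every x ∈ 𝒳 reaches x* under iteration of g. Suppose π is a positive function on 𝒳, there exist reals r > 1 with π(g(x)) ≥ r·π(x) for all x ≠ x*, and an integer M ≥ 1 with |g⁻¹(u) \ {u}| ≤ M for all u (where g⁻¹(u) = {x : g(x) = u}). If M < r, then for every u ∈ 𝒳, the total π-mass of the set Λ(u) = {x : g^k(x) = u for some k ∈ ℕ} satisfies π(Λ(u)) ≤ π(u)/(1 − M/r). -/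
open Classical in
theorem stmt_12 {X : Type*} [Fintype X]
    (π : X → ℝ) (hπ : ∀ x, 0 < π x)
    (xstar : X) (g : X → X) (hfix : g xstar = xstar)
    (hreach : ∀ x, ∃ k : ℕ, g^[k] x = xstar)
    (r : ℝ) (hr : 1 < r) (hinc : ∀ x, x ≠ xstar → r * π x ≤ π (g x))
    (M : ℕ) (hM : 1 ≤ M)
    (hdeg : ∀ u, ((Finset.univ.filter (fun x => g x = u ∧ x ≠ u)).card : ℕ) ≤ M)
    (hMr : (M : ℝ) < r) :
    ∀ u, ∑ x ∈ Finset.univ.filter (fun x => ∃ k : ℕ, g^[k] x = u), π x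
      ≤ π u / (1 - (M : ℝ) / r) := by
  intro u
  classical
  have hr0 : (0:ℝ) < r := lt_trans one_pos hr
  have fixiter : ∀ y : X, g y = y → ∀ m : ℕ, g^[m] y = y := by
    intro y hy m
    induction m with
    | zero => rfl
    | succ m ihm => rw [Function.iterate_succ_apply, hy]; exact ihm
  -- layers by minimal hitting time
  set S : ℕ → Finset X := fun k =>
    Finset.univ.filter (fun x => g^[k] x = u ∧ ∀ j < k, g^[j] x ≠ u) with hS
  have hmemS : ∀ k x, x ∈ S k ↔ (g^[k] x = u ∧ ∀ j < k, g^[j] x ≠ u) := by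
    intro k x; simp [hS]
  -- Lemma A: cardinality bound
  have cardS : ∀ k, (S k).card ≤ M ^ k := by
    intro k
    induction k with
    | zero =>
      have : S 0 ⊆ {u} := by
        intro x hx
        rcases (hmemS 0 x).1 hx with ⟨h0, _⟩
        simp at h0 ⊢; exact h0
      simpa using Finset.card_le_card this
    | succ k ih =>
      have himg : (S (k+1)).image g ⊆ S k := by
        intro v hv
        rcases Finset.mem_image.1 hv with ⟨x, hx, rfl⟩
        rcases (hmemS (k+1) x).1 hx with ⟨hk1, hmin⟩
        refine (hmemS k (g x)).2 ⟨?_, ?_⟩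
        · rw [← Function.iterate_succ_apply]; exact hk1
        · intro j hj
          have := hmin (j+1) (Nat.succ_lt_succ hj)
          simpa [Function.iterate_succ_apply] using this
      have hfib : ∀ v ∈ (S (k+1)).image g,
          ((S (k+1)).filter (fun x => g x = v)).card ≤ M := by
        intro v _
        refine le_trans (Finset.card_le_card ?_) (hdeg v)
        intro x hx
        rcases Finset.mem_filter.1 hx with ⟨hxS, hgx⟩
        rcases (hmemS (k+1) x).1 hxS with ⟨hk1, hmin⟩
        have hxne : x ≠ v := by
          intro hxv
          have hgg : g x = x := by rw [hgx, hxv]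
          have h0 : g^[0] x ≠ u := hmin 0 (Nat.succ_pos k)
          exact h0 (by simpa [fixiter x hgg (k+1)] using hk1)
        simp [hgx, hxne]
      calc (S (k+1)).card ≤ M * ((S (k+1)).image g).card :=
            Finset.card_le_mul_card_image _ M hfib
        _ ≤ M * (S k).card := Nat.mul_le_mul_left M (Finset.card_le_card himg)
        _ ≤ M * M ^ k := Nat.mul_le_mul_left M ih
        _ = M ^ (k+1) := by ring
  -- Lemma B: mass bound
  have massS : ∀ k, ∀ x ∈ S k, r ^ k * π x ≤ π u := by
    intro k
    induction k with
    | zero =>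
      intro x hx
      rcases (hmemS 0 x).1 hx with ⟨h0, _⟩
      simp at h0
      simp [h0]
    | succ k ih =>
      intro x hx
      rcases (hmemS (k+1) x).1 hx with ⟨hk1, hmin⟩
      have hxstar : x ≠ xstar := by
        intro hxv
        have hgg : g x = x := by rw [hxv, hfix]
        exact hmin 0 (Nat.succ_pos k) (by simpa [fixiter x hgg (k+1)] using hk1)
      have hgxS : g x ∈ S k := by
        refine (hmemS k (g x)).2 ⟨?_, ?_⟩
        · rw [← Function.iterate_succ_apply]; exact hk1
        · intro j hj
          have := hmin (j+1) (Nat.succ_lt_succ hj)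
          simpa [Function.iterate_succ_apply] using this
      have h1 : r ^ k * π (g x) ≤ π u := ih (g x) hgxS
      have h2 : r * π x ≤ π (g x) := hinc x hxstar
      calc r ^ (k+1) * π x = r ^ k * (r * π x) := by ring
        _ ≤ r ^ k * π (g x) :=
            mul_le_mul_of_nonneg_left h2 (pow_nonneg (le_of_lt hr0) k)
        _ ≤ π u := h1
  -- sum over each layer
  have sumS : ∀ k, ∑ x ∈ S k, π x ≤ ((M:ℝ)/r) ^ k * π u := by
    intro k
    have hb : ∀ x ∈ S k, π x ≤ π u / r ^ k := by
      intro x hx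
      rw [le_div_iff₀ (pow_pos hr0 k), mul_comm]
      exact massS k x hx
    calc ∑ x ∈ S k, π x ≤ (S k).card • (π u / r ^ k) :=
          Finset.sum_le_card_nsmul _ _ _ hb
      _ = ((S k).card : ℝ) * (π u / r ^ k) := by simp [nsmul_eq_mul]
      _ ≤ (M ^ k : ℝ) * (π u / r ^ k) := by
          apply mul_le_mul_of_nonneg_right
          · exact_mod_cast cardS k
          · exact div_nonneg (le_of_lt (hπ u)) (le_of_lt (pow_pos hr0 k))
      _ = ((M:ℝ)/r) ^ k * π u := by
          rw [div_pow]; ring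
  -- covering: Λ(u) ⊆ ⋃_{k < N} S k with N = card X
  set N := Fintype.card X with hN
  have hcover : Finset.univ.filter (fun x => ∃ k : ℕ, g^[k] x = u)
      ⊆ (Finset.range N).biUnion S := by
    intro x hx
    rcases Finset.mem_filter.1 hx with ⟨-, hex⟩
    have hk := Nat.find_spec hex
    set k := Nat.find hex with hkdef
    have hmin : ∀ j < k, g^[j] x ≠ u := fun j hj => Nat.find_min hex hj
    have key : ∀ a b : ℕ, a < b → b ≤ k → g^[b] x = g^[a] x → False := by
      intro a b hab hbk he
      apply hmin (k - b + a) (by omega)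
      have h1 : g^[k - b] (g^[b] x) = g^[k] x := by
        rw [← Function.iterate_add_apply]
        congr 1
        omega
      have h2 : g^[k - b] (g^[a] x) = g^[k - b + a] x :=
        (Function.iterate_add_apply g (k - b) a x).symm
      rw [← h2, ← he, h1]
      exact hk
    have hinj : Function.Injective (fun i : Fin (k+1) => g^[(i:ℕ)] x) := by
      intro i j hij
      by_contra hne
      have hne' : (i:ℕ) ≠ (j:ℕ) := fun h => hne (Fin.ext h)
      have hij' : g^[(i:ℕ)] x = g^[(j:ℕ)] x := hij
      rcases Nat.lt_or_ge (i:ℕ) (j:ℕ) with h | h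
      · exact key i j h (Fin.is_le j) hij'.symm
      · exact key j i (lt_of_le_of_ne h (Ne.symm hne')) (Fin.is_le i) hij'
    have hcard : k + 1 ≤ N := by
      have := Fintype.card_le_of_injective _ hinj
      simpa [hN] using this
    refine Finset.mem_biUnion.2 ⟨k, Finset.mem_range.2 (by omega), ?_⟩
    exact (hmemS k x).2 ⟨hk, hmin⟩
  -- disjointness
  have hdisj : ∀ k ∈ Finset.range N, ∀ l ∈ Finset.range N, k ≠ l →
      Disjoint (S k) (S l) := by
    intro k _ l _ hkl
    refine Finset.disjoint_left.2 ?_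
    intro x hxk hxl
    rcases (hmemS k x).1 hxk with ⟨hk, hkmin⟩
    rcases (hmemS l x).1 hxl with ⟨hl, hlmin⟩
    rcases lt_or_gt_of_ne hkl with h | h
    · exact hlmin k h hk
    · exact hkmin l h hl
  -- geometric sum
  have hq0 : (0:ℝ) ≤ (M:ℝ)/r := by positivity
  have hq1 : (M:ℝ)/r < 1 := (div_lt_one hr0).2 hMr
  have hgeom : ∑ k ∈ Finset.range N, ((M:ℝ)/r) ^ k ≤ 1 / (1 - (M:ℝ)/r) := by
    set q := (M:ℝ)/r
    have hqne : q ≠ 1 := ne_of_lt hq1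
    have h1q : (0:ℝ) < 1 - q := by linarith
    rw [geom_sum_eq hqne]
    have heq : (q ^ N - 1) / (q - 1) = (1 - q ^ N) / (1 - q) := by
      rw [div_eq_div_iff (sub_ne_zero.2 hqne) (ne_of_gt h1q)]
      ring
    rw [heq]
    have hnum : 1 - q ^ N ≤ 1 := by nlinarith [pow_nonneg hq0 N]
    exact div_le_div₀ zero_le_one hnum h1q le_rfl
  calc ∑ x ∈ Finset.univ.filter (fun x => ∃ k : ℕ, g^[k] x = u), π x
      ≤ ∑ x ∈ (Finset.range N).biUnion S, π x := by
        apply Finset.sum_le_sum_of_subset_of_nonneg hcover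
        intro x _ _; exact le_of_lt (hπ x)
    _ = ∑ k ∈ Finset.range N, ∑ x ∈ S k, π x := Finset.sum_biUnion hdisj
    _ ≤ ∑ k ∈ Finset.range N, ((M:ℝ)/r) ^ k * π u :=
        Finset.sum_le_sum (fun k _ => sumS k)
    _ = (∑ k ∈ Finset.range N, ((M:ℝ)/r) ^ k) * π u := by
        rw [Finset.sum_mul]
    _ ≤ (1 / (1 - (M:ℝ)/r)) * π u :=
        mul_le_mul_of_nonneg_right hgeom (le_of_lt (hπ u))
    _ = π u / (1 - (M:ℝ)/r) := by ring
end
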